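/- Let Γ_Π be the stable translation quiver of unoriented diagonals of a regular heptagon (vertices the diagonals (i,j), arrows (i,j) → (i,j+1) and (i,j) → (i+1,j) whenever both source and target are diagonals, and translation τ(i,j) = (i−1,j−1)), whose mesh category generates the cluster category C_{A_4}. Then the map π: Γ^7_{1,2,2} → Γ_Π sending each coloured oriented single or paired diagonal [i,j]_c to the underlying unoriented diagonal (i,j) is a surjective morphism of stable translation quivers: it commutes with the translations, maps arrows to arrows, and is surjective on vertices and on arrows; consequently it induces a dense and full functor C_{E_6} → C_{A_4}. -/

import Mathlib

/-!
Coloured oriented single and paired diagonals in a regular polygon, following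
L. Lamberti, "Combinatorial model for the cluster categories of type E".

The vertices of the regular `m`-gon `Π` are labelled by `ZMod m` (clockwise).
A coloured oriented diagonal `[i,j]_c` is encoded by the structure `Diag`;
the colour `P` encodes a *paired* diagonal `[i,j]_P = {[i,j]_R, [j,i]_B}`.
-/

inductive Colour : Type
  | R : Colour
  | B : Colour
  | P : Colour
deriving DecidableEq

/-- A coloured oriented (single or paired) diagonal `[i,j]_c` of the regular
`m`-gon (for `m = 0` we interpret `ZMod 0 = ℤ` as the infinite-sided polygon). -/
structure Diag (m : ℕ) where
  i : ZMod m
  j : ZMod m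
  c : Colour
deriving DecidableEq

/-- The simultaneous change of colour and orientation:
`ρ([i,j]_R) = [j,i]_B`, `ρ([i,j]_B) = [j,i]_R`, `ρ([i,j]_P) = [i,j]_P`. -/
def rho {m : ℕ} : Diag m → Diag m
  | ⟨i, j, Colour.R⟩ => ⟨j, i, Colour.B⟩
  | ⟨i, j, Colour.B⟩ => ⟨j, i, Colour.R⟩
  | ⟨i, j, Colour.P⟩ => ⟨i, j, Colour.P⟩

/-- The anticlockwise rotation `[i,j]_c ↦ [i-1,j-1]_c`. -/
def shiftD {m : ℕ} (d : Diag m) : Diag m := ⟨d.i - 1, d.j - 1, d.c⟩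

/-- The slice of `Π_{r,s,t}` based at the vertex `i` of `Π`:
the paired diagonals `[i,i+2]_P, …, [i,i+r+2]_P`, the red single diagonals
`[i,i+r+3]_R, …, [i,i+r+s+2]_R` and the blue single diagonals
`[i+r+3,i]_B, …, [i+r+t+2,i]_B`. -/
def PiSetAt (r s t : ℕ) {m : ℕ} (i : ZMod m) : Set (Diag m) :=
  {d | (∃ k : ℕ, 2 ≤ k ∧ k ≤ r + 2 ∧ d = ⟨i, i + (k : ZMod m), Colour.P⟩) ∨
       (∃ k : ℕ, r + 3 ≤ k ∧ k ≤ r + s + 2 ∧ d = ⟨i, i + (k : ZMod m), Colour.R⟩) ∨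
       (∃ k : ℕ, r + 3 ≤ k ∧ k ≤ r + t + 2 ∧ d = ⟨i + (k : ZMod m), i, Colour.B⟩)}

/-- The set `Π_{r,s,t}` of coloured oriented single and paired diagonals of the
regular `m`-gon associated to the tree `T_{r,s,t}`. -/
def PiSet (r s t m : ℕ) : Set (Diag m) := ⋃ i : ZMod m, PiSetAt r s t i

open Classical in
/-- The translation `τ` on coloured oriented diagonals: the anticlockwise
rotation `[i,j]_c ↦ [i-1,j-1]_c`, composed with `ρ^{m}` on the first slice
`Π_{r,s,t}|_1` when the tree is symmetric (`s = t`). -/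
noncomputable def tauD (r s t : ℕ) {m : ℕ} (d : Diag m) : Diag m :=
  if s = t ∧ d ∈ PiSetAt r s t (1 : ZMod m) then rho^[m] (shiftD d) else shiftD d

/-- Minimal clockwise rotations (before the colour adjustment at the seam):
`[k,l]_c → [k,l+1]_c`, `[k,l]_c → [k+1,l]_c`, together with
`[k,k+r+2]_P → [k,k+r+3]_R`, `[k,k+r+2]_P → [k+r+3,k]_B`,
`[k,k+r+3]_R → [k+1,k+r+3]_P` and `[k+r+3,k]_B → [k+1,k+r+3]_P`. -/
def Rot (r : ℕ) {m : ℕ} (a b : Diag m) : Prop :=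
  b = ⟨a.i, a.j + 1, a.c⟩ ∨ b = ⟨a.i + 1, a.j, a.c⟩ ∨
  (∃ k : ZMod m, a = ⟨k, k + ((r : ZMod m) + 2), Colour.P⟩ ∧
    (b = ⟨k, k + ((r : ZMod m) + 3), Colour.R⟩ ∨
     b = ⟨k + ((r : ZMod m) + 3), k, Colour.B⟩)) ∨
  (∃ k : ZMod m,
    (a = ⟨k, k + ((r : ZMod m) + 3), Colour.R⟩ ∨
     a = ⟨k + ((r : ZMod m) + 3), k, Colour.B⟩) ∧
    b = ⟨k + 1, k + ((r : ZMod m) + 3), Colour.P⟩)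

/-- In the symmetric case `s = t` with an odd-sided polygon, the arrows whose
source lies in `τ(Π_{r,t,t}|_1)` and whose (unadjusted) target lies in the
first slice `Π_{r,t,t}|_1` additionally change colour and orientation. -/
def SeamTwist (r s t m : ℕ) (a b₀ : Diag m) : Prop :=
  s = t ∧ Odd m ∧ a ∈ (tauD r s t) '' (PiSetAt r s t (1 : ZMod m)) ∧
    b₀ ∈ PiSetAt r s t (1 : ZMod m)

/-- The arrows of the quiver `Γ^{m}_{r,s,t}`: minimal clockwise rotations
between elements of `Π_{r,s,t}`, adjusted by `ρ` at the seam. -/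
def ArrowD (r s t m : ℕ) (a b : Diag m) : Prop :=
  a ∈ PiSet r s t m ∧ b ∈ PiSet r s t m ∧
    ∃ b₀, Rot r a b₀ ∧
      ((SeamTwist r s t m a b₀ ∧ b = rho b₀) ∨ (¬ SeamTwist r s t m a b₀ ∧ b = b₀))

/-- The underlying unoriented diagonal (chord) of a coloured oriented
single or paired diagonal. -/
def uchord (d : Diag 7) : Sym2 (ZMod 7) := Sym2.mk d.i d.j

/-- Unoriented diagonals of the heptagon: chords `(a,b)` with `a`, `b`
distinct and non-adjacent vertices. -/
def IsUDiag (u : Sym2 (ZMod 7)) : Prop :=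
  ∃ a b : ZMod 7, u = Sym2.mk a b ∧ b ≠ a ∧ b ≠ a + 1 ∧ a ≠ b + 1

/-- The arrows of the Caldero–Chapoton–Schiffler quiver `Γ_Π` of unoriented
diagonals of the heptagon: `(a,b) → (a,b+1)` and `(a,b) → (a+1,b)` whenever
both the source and the target are diagonals. -/
def UArrow (u v : Sym2 (ZMod 7)) : Prop :=
  IsUDiag u ∧ IsUDiag v ∧
    ∃ a b : ZMod 7, u = Sym2.mk a b ∧
      (v = Sym2.mk a (b + 1) ∨ v = Sym2.mk (a + 1) b)

/-- The translation `τ(a,b) = (a-1,b-1)` of `Γ_Π`. -/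
def utau : Sym2 (ZMod 7) → Sym2 (ZMod 7) := Sym2.map (fun x => x - 1)

/-!
Forgetting colour and orientation is compatible with everything in sight: `ρ` only swaps the
endpoints of a chord, so `uchord ∘ τ = utau ∘ uchord` and the seam twist of an arrow does not
change the chord of its target, while every minimal clockwise rotation moves one endpoint of a
chord one step clockwise. For surjectivity, the diagonal `(x, x + d)`, `d ∈ {2, 3, 4, 5}`, is
covered by `[x, x + d]_P` or `[x, x + d]_R`, and rotations between these lifts cover every arrow
of `Γ_Π`; as `Π_{1,2,2}` is `ρ`-stable, each of them becomes an arrow of `Γ^7_{1,2,2}` after the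
seam twist.
-/

lemma uchord_rho (d : Diag 7) : uchord (rho d) = uchord d := by
  obtain ⟨i, j, _ | _ | _⟩ := d <;> simp only [rho, uchord, Sym2.eq_swap]

lemma uchord_rho_iterate (n : ℕ) (d : Diag 7) : uchord (rho^[n] d) = uchord d := by
  induction n with
  | zero => rfl
  | succ n ih => rw [Function.iterate_succ_apply', uchord_rho, ih]

lemma uchord_tauD (r s t : ℕ) (d : Diag 7) : uchord (tauD r s t d) = utau (uchord d) := by
  unfold tauD
  split_ifs
  · rw [uchord_rho_iterate]
    rfl
  · rfl

lemma Rot.exists_uchord_eq {r : ℕ} {a b : Diag 7} (h : Rot r a b) :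
    ∃ x y : ZMod 7, uchord a = s(x, y) ∧ (uchord b = s(x, y + 1) ∨ uchord b = s(x + 1, y)) := by
  rcases h with rfl | rfl | ⟨k, rfl, rfl | rfl⟩ | ⟨k, rfl | rfl, rfl⟩
  · exact ⟨a.i, a.j, rfl, Or.inl rfl⟩
  · exact ⟨a.i, a.j, rfl, Or.inr rfl⟩
  · exact ⟨k, k + (r + 2), rfl, Or.inl (by simp only [uchord]; ring_nf)⟩
  · exact ⟨k, k + (r + 2), rfl, Or.inl (by simp only [uchord]; rw [Sym2.eq_swap]; ring_nf)⟩
  · exact ⟨k, k + (r + 3), rfl, Or.inr rfl⟩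
  · exact ⟨k, k + (r + 3), Sym2.eq_swap, Or.inr rfl⟩

lemma rho_mem_PiSetAt {r t m : ℕ} {i : ZMod m} {d : Diag m} (hd : d ∈ PiSetAt r t t i) :
    rho d ∈ PiSetAt r t t i := by
  rcases hd with ⟨k, hk, hk', rfl⟩ | ⟨k, hk, hk', rfl⟩ | ⟨k, hk, hk', rfl⟩
  · exact Or.inl ⟨k, hk, hk', rfl⟩
  · exact Or.inr (Or.inr ⟨k, hk, hk', rfl⟩)
  · exact Or.inr (Or.inl ⟨k, hk, hk', rfl⟩)

lemma exists_arrowD_of_rot {r s t m : ℕ} {a b₀ : Diag m} (ha : a ∈ PiSet r s t m)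
    (hb₀ : b₀ ∈ PiSet r s t m) (h : Rot r a b₀) :
    ∃ b, ArrowD r s t m a b ∧ (b = b₀ ∨ b = rho b₀) := by
  by_cases hs : SeamTwist r s t m a b₀
  · obtain ⟨rfl, -, -, hb₀₁⟩ := id hs
    exact ⟨rho b₀, ⟨ha, Set.mem_iUnion.2 ⟨1, rho_mem_PiSetAt hb₀₁⟩, b₀, h, Or.inl ⟨hs, rfl⟩⟩,
      Or.inr rfl⟩
  · exact ⟨b₀, ⟨ha, hb₀, b₀, h, Or.inr ⟨hs, rfl⟩⟩, Or.inl rfl⟩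

lemma isUDiag_mk_add_iff (a d : ZMod 7) :
    IsUDiag s(a, a + d) ↔ d ∈ ({2, 3, 4, 5} : Finset (ZMod 7)) := by
  have offsets_iff : ∀ d : ZMod 7,
      d ∈ ({2, 3, 4, 5} : Finset (ZMod 7)) ↔ d ≠ 0 ∧ d ≠ 1 ∧ d + 1 ≠ 0 := by
    decide
  rw [offsets_iff]
  constructor
  · rintro ⟨x, y, h, hxy, hxy1, hyx1⟩
    rcases Sym2.eq_iff.1 h with ⟨rfl, rfl⟩ | ⟨rfl, rfl⟩ <;> grind
  · rintro ⟨_, _, _⟩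
    exact ⟨a, a + d, rfl, by grind, by grind, by grind⟩

lemma isUDiag_uchord {d : Diag 7} (hd : d ∈ PiSet 1 2 2 7) : IsUDiag (uchord d) := by
  have offset_mem : ∀ k : ℕ, 2 ≤ k → k ≤ 5 → (k : ZMod 7) ∈ ({2, 3, 4, 5} : Finset (ZMod 7)) := by
    intro k hk hk'
    interval_cases k <;> decide
  obtain ⟨i, hd⟩ := Set.mem_iUnion.1 hd
  rcases hd with ⟨k, hk, hk', rfl⟩ | ⟨k, hk, hk', rfl⟩ | ⟨k, hk, hk', rfl⟩
  · exact (isUDiag_mk_add_iff i k).2 (offset_mem k hk (by omega))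
  · exact (isUDiag_mk_add_iff i k).2 (offset_mem k (by omega) hk')
  · rw [uchord, Sym2.eq_swap]
    exact (isUDiag_mk_add_iff i k).2 (offset_mem k (by omega) hk')

lemma uArrow_uchord_of_arrowD {a b : Diag 7} (h : ArrowD 1 2 2 7 a b) :
    UArrow (uchord a) (uchord b) := by
  obtain ⟨ha, hb, b₀, hrot, hb₀⟩ := h
  have hchord : uchord b = uchord b₀ := by
    rcases hb₀ with ⟨-, rfl⟩ | ⟨-, rfl⟩
    · exact uchord_rho b₀
    · rfl
  obtain ⟨x, y, hx, hy⟩ := hrot.exists_uchord_eq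
  exact ⟨isUDiag_uchord ha, isUDiag_uchord hb, x, y, hx, hchord ▸ hy⟩

def liftD (x d : ZMod 7) : Diag 7 := ⟨x, x + d, if d = 2 ∨ d = 3 then .P else .R⟩

lemma uchord_liftD (x d : ZMod 7) : uchord (liftD x d) = s(x, x + d) := rfl

lemma liftD_mem_PiSet (x : ZMod 7) {d : ZMod 7} (hd : d ∈ ({2, 3, 4, 5} : Finset (ZMod 7))) :
    liftD x d ∈ PiSet 1 2 2 7 := by
  refine Set.mem_iUnion.2 ⟨x, ?_⟩
  simp only [Finset.mem_insert, Finset.mem_singleton] at hd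
  rcases hd with rfl | rfl | rfl | rfl
  · exact Or.inl ⟨2, le_rfl, by norm_num, rfl⟩
  · exact Or.inl ⟨3, by norm_num, by norm_num, rfl⟩
  · exact Or.inr (Or.inl ⟨4, by norm_num, by norm_num, rfl⟩)
  · exact Or.inr (Or.inl ⟨5, by norm_num, by norm_num, rfl⟩)

lemma rot_liftD_add_one (x : ZMod 7) {d : ZMod 7} (hd : d ∈ ({2, 3, 4} : Finset (ZMod 7))) :
    Rot 1 (liftD x d) (liftD x (d + 1)) := by
  simp only [Finset.mem_insert, Finset.mem_singleton] at hd
  rcases hd with rfl | rfl | rfl <;>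
    [refine Or.inl ?_; refine Or.inr (Or.inr (Or.inl ⟨x, ?_, Or.inl ?_⟩)); refine Or.inl ?_] <;>
    simp only [liftD, Nat.cast_one] <;> congr 1 <;> ring

lemma rot_liftD_sub_one (x : ZMod 7) {d : ZMod 7} (hd : d ∈ ({3, 4, 5} : Finset (ZMod 7))) :
    Rot 1 (liftD x d) (liftD (x + 1) (d - 1)) := by
  simp only [Finset.mem_insert, Finset.mem_singleton] at hd
  rcases hd with rfl | rfl | rfl <;>
    [refine Or.inr (Or.inl ?_); refine Or.inr (Or.inr (Or.inr ⟨x, Or.inl ?_, ?_⟩));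
      refine Or.inr (Or.inl ?_)] <;>
    simp only [liftD, Nat.cast_one] <;> congr 1 <;> ring

lemma exists_mem_PiSet_uchord_eq {u : Sym2 (ZMod 7)} (hu : IsUDiag u) :
    ∃ d ∈ PiSet 1 2 2 7, uchord d = u := by
  obtain ⟨x, y, rfl, -⟩ := id hu
  obtain ⟨d, rfl⟩ : ∃ d, y = x + d := ⟨y - x, by ring⟩
  exact ⟨liftD x d, liftD_mem_PiSet x ((isUDiag_mk_add_iff x d).1 hu), rfl⟩

lemma exists_arrowD_uchord_eq {u v : Sym2 (ZMod 7)} (h : UArrow u v) :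
    ∃ a b : Diag 7, ArrowD 1 2 2 7 a b ∧ uchord a = u ∧ uchord b = v := by
  obtain ⟨hu, hv, x, y, rfl, hxy⟩ := h
  obtain ⟨d, rfl⟩ : ∃ d, y = x + d := ⟨y - x, by ring⟩
  replace hu := (isUDiag_mk_add_iff x d).1 hu
  obtain ⟨b₀, ha, hb₀, hrot, rfl⟩ : ∃ b₀, liftD x d ∈ PiSet 1 2 2 7 ∧ b₀ ∈ PiSet 1 2 2 7 ∧
      Rot 1 (liftD x d) b₀ ∧ uchord b₀ = v := by
    rcases hxy with rfl | rfl
    · rw [add_assoc, isUDiag_mk_add_iff] at hv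
      have hd : d ∈ ({2, 3, 4} : Finset (ZMod 7)) := by revert d; decide
      exact ⟨_, liftD_mem_PiSet x hu, liftD_mem_PiSet x hv, rot_liftD_add_one x hd,
        by rw [uchord_liftD, add_assoc]⟩
    · rw [show x + d = x + 1 + (d - 1) by ring, isUDiag_mk_add_iff] at hv
      have hd : d ∈ ({3, 4, 5} : Finset (ZMod 7)) := by revert d; decide
      exact ⟨_, liftD_mem_PiSet x hu, liftD_mem_PiSet (x + 1) hv, rot_liftD_sub_one x hd,
        by rw [uchord_liftD]; ring_nf⟩
  obtain ⟨b, hab, rfl | rfl⟩ := exists_arrowD_of_rot ha hb₀ hrot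
  · exact ⟨_, _, hab, rfl, rfl⟩
  · exact ⟨_, _, hab, rfl, uchord_rho b₀⟩

/-- Corollary 4.4. The map `π : Γ^7_{1,2,2} → Γ_Π` sending
each coloured oriented single or paired diagonal `[i,j]_c` to the underlying
unoriented diagonal `(i,j)` is a surjective morphism of stable translation
quivers: it maps vertices to vertices and commutes with the translations,
it maps arrows to arrows, and it is surjective on vertices and on arrows.
(Consequently it induces a dense and full functor `C_{E₆} → C_{A₄}` between
the corresponding cluster categories.) -/
theorem projection_to_CCS_heptagon :
    (∀ d ∈ PiSet 1 2 2 7, IsUDiag (uchord d)) ∧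
    (∀ d ∈ PiSet 1 2 2 7, uchord (tauD 1 2 2 d) = utau (uchord d)) ∧
    (∀ a b : Diag 7, ArrowD 1 2 2 7 a b → UArrow (uchord a) (uchord b)) ∧
    (∀ u, IsUDiag u → ∃ d ∈ PiSet 1 2 2 7, uchord d = u) ∧
    (∀ u v, UArrow u v →
      ∃ a b : Diag 7, ArrowD 1 2 2 7 a b ∧ uchord a = u ∧ uchord b = v) :=
  ⟨fun _ hd => isUDiag_uchord hd, fun d _ => uchord_tauD 1 2 2 d,
    fun _ _ h => uArrow_uchord_of_arrowD h, fun _ hu => exists_mem_PiSet_uchord_eq hu,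
    fun _ _ h => exists_arrowD_uchord_eq h⟩
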